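/- Let A and B be Banach algebras with contractive approximate units and let E be a nondegenerate Banach A-B-bimodule. Let F be a Banach A-B-bimodule containing E isometrically as a closed sub-bimodule and such that a·ξ ∈ E and ξ·b ∈ E for every ξ ∈ F, a ∈ A, b ∈ B. Then there exists a unique A-B-bimodule map μ : F → M(E) whose restriction to E is the canonical embedding ι : E → M(E); this μ is automatically contractive; and μ is injective if and only if F is essential, i.e. for ξ ∈ F, a·ξ = 0 for all a ∈ A implies ξ = 0. (This is the paper's universal characterisation of the multiplier bimodule M(E) as the largest essential multiplier extension of E.) -/

import Mathlib

/-!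
For `ξ ∈ F` the maps `a ↦ a·ξ` and `b ↦ ξ·b` take values in `E`, and read back in `E` they form
a multiplier `μ ξ`; it has norm at most `‖ξ‖` because `j` is isometric.

Any bimodule map `μ'` extending `ι` satisfies `μ'(ξ).1 (p * q) = p·(q·ξ)`, so its first component
is forced on products, which are dense in `A` by the approximate unit. Its second component is then
forced as well: a contractive approximate unit makes the nondegenerate module `E` essential
(`e_i·η → η` for every `η`), and a multiplier `(R, L)` of an essential module is determined by `R`,
since `a·L(b) = R(a)·b`. The same argument shows `μ ξ = 0` iff `A·ξ = 0`, which is the injectivity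
criterion.
-/

open Filter

namespace Stmt7

universe u v w x

/-- `A` has a contractive two-sided approximate unit, indexed by a filter. -/
def HasCAI (A : Type u) [NonUnitalNormedRing A] : Prop :=
  ∃ (ι : Type u) (l : Filter ι) (e : ι → A), l.NeBot ∧ (∀ i, ‖e i‖ ≤ 1) ∧
    ∀ a : A, Tendsto (fun i => ‖e i * a - a‖) l (nhds 0) ∧
      Tendsto (fun i => ‖a * e i - a‖) l (nhds 0)

variable {A : Type u} {B : Type v} {E : Type w} {F : Type x}
variable [NonUnitalNormedRing A] [NormedSpace ℂ A] [IsScalarTower ℂ A A] [SMulCommClass ℂ A A]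
variable [NonUnitalNormedRing B] [NormedSpace ℂ B] [IsScalarTower ℂ B B] [SMulCommClass ℂ B B]
variable [NormedAddCommGroup E] [NormedSpace ℂ E] [CompleteSpace E]
variable [NormedAddCommGroup F] [NormedSpace ℂ F] [CompleteSpace F]

section Defs

variable (lE : A →L[ℂ] E →L[ℂ] E) (rE : B →L[ℂ] E →L[ℂ] E)

/-- `(lE, rE)` makes `E` a Banach `A`-`B`-bimodule, with `lE a ξ = a·ξ` and `rE b ξ = ξ·b`. -/
structure IsBanachBimodule : Prop where
  lsmul_mul : ∀ a a' ξ, lE (a * a') ξ = lE a (lE a' ξ)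
  rsmul_mul : ∀ b b' ξ, rE (b * b') ξ = rE b' (rE b ξ)
  smul_comm : ∀ a b ξ, rE b (lE a ξ) = lE a (rE b ξ)
  norm_lsmul : ∀ a ξ, ‖lE a ξ‖ ≤ ‖a‖ * ‖ξ‖
  norm_rsmul : ∀ b ξ, ‖rE b ξ‖ ≤ ‖b‖ * ‖ξ‖

def NondegenerateBimodule : Prop :=
  closure (↑(Submodule.span ℂ {y : E | ∃ a ξ, lE a ξ = y}) : Set E) = Set.univ ∧
    closure (↑(Submodule.span ℂ {y : E | ∃ b ξ, rE b ξ = y}) : Set E) = Set.univ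

/-- `M(E)` is the set of multipliers inside `(A →L[ℂ] E) × (B →L[ℂ] E)`, whose norm is the max
norm. -/
def IsMultiplier (p : (A →L[ℂ] E) × (B →L[ℂ] E)) : Prop :=
  ∀ a b, lE a (p.2 b) = rE b (p.1 a)

noncomputable def iota (ξ : E) : (A →L[ℂ] E) × (B →L[ℂ] E) := (lE.flip ξ, rE.flip ξ)

noncomputable def aAct (a : A) (p : (A →L[ℂ] E) × (B →L[ℂ] E)) :
    (A →L[ℂ] E) × (B →L[ℂ] E) :=
  (p.1.comp ((ContinuousLinearMap.mul ℂ A).flip a), (lE a).comp p.2)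

noncomputable def bAct (p : (A →L[ℂ] E) × (B →L[ℂ] E)) (b : B) :
    (A →L[ℂ] E) × (B →L[ℂ] E) :=
  ((rE b).comp p.1, p.2.comp (ContinuousLinearMap.mul ℂ B b))

end Defs

variable (lE : A →L[ℂ] E →L[ℂ] E) (rE : B →L[ℂ] E →L[ℂ] E)
variable (lF : A →L[ℂ] F →L[ℂ] F) (rF : B →L[ℂ] F →L[ℂ] F)

def IsBimoduleMapExtendingIota (j : E → F) (μ : F → (A →L[ℂ] E) × (B →L[ℂ] E)) : Prop :=
  (∀ ξ : F, IsMultiplier lE rE (μ ξ)) ∧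
    (∀ ξ η : F, μ (ξ + η) = μ ξ + μ η) ∧
    (∀ (c : ℂ) (ξ : F), μ (c • ξ) = c • μ ξ) ∧
    (∀ (a : A) (ξ : F), μ (lF a ξ) = aAct lE a (μ ξ)) ∧
    (∀ (b : B) (ξ : F), μ (rF b ξ) = bAct rE (μ ξ) b) ∧
    ∀ ξ : E, μ (j ξ) = iota lE rE ξ

theorem HasCAI.ext_of_mul {R X : Type*} [NonUnitalNormedRing R] [TopologicalSpace X] [T2Space X]
    (hR : HasCAI R) {f g : R → X} (hf : Continuous f) (hg : Continuous g)
    (h : ∀ p q, f (p * q) = g (p * q)) : f = g := by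
  obtain ⟨ι, l, e, hl, -, he⟩ := hR
  funext a
  have hea : Tendsto (e · * a) l (nhds a) := tendsto_iff_norm_sub_tendsto_zero.2 (he a).1
  exact tendsto_nhds_unique ((hf.tendsto a).comp hea)
    (by simpa only [Function.comp_def, h] using (hg.tendsto a).comp hea)

section Lift

variable {𝕜 E F X : Type*} [NormedField 𝕜] [SeminormedAddCommGroup X] [NormedSpace 𝕜 X]
  [NormedAddCommGroup E] [NormedSpace 𝕜 E] [NormedAddCommGroup F] [NormedSpace 𝕜 F]

noncomputable def liftAlong (J : E →ₗᵢ[𝕜] F) (T : X →L[𝕜] F) (hT : Set.range T ⊆ Set.range J) :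
    X →L[𝕜] E :=
  (J.equivRange.symm.toContinuousLinearEquiv : LinearMap.range J.toLinearMap →L[𝕜] E).comp
    (T.codRestrict (LinearMap.range J.toLinearMap) fun x => hT (Set.mem_range_self x))

@[simp]
theorem apply_liftAlong (J : E →ₗᵢ[𝕜] F) (T : X →L[𝕜] F) (hT : Set.range T ⊆ Set.range J) (x : X) :
    J (liftAlong J T hT x) = T x :=
  congrArg Subtype.val (J.equivRange.apply_symm_apply ⟨T x, hT (Set.mem_range_self x)⟩)

end Lift

section Essential

variable {𝕜 A E : Type*} [NontriviallyNormedField 𝕜] [NonUnitalNormedRing A] [NormedSpace 𝕜 A]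
  [NormedAddCommGroup E] [NormedSpace 𝕜 E]

def IsEssential (l : A →L[𝕜] E →L[𝕜] E) : Prop :=
  ∀ ξ, (∀ a, l a ξ = 0) → ξ = 0

variable {l : A →L[𝕜] E →L[𝕜] E}

theorem tendsto_lsmul_of_approxUnit (hmul : ∀ a a' ξ, l (a * a') ξ = l a (l a' ξ))
    (hnorm : ∀ a ξ, ‖l a ξ‖ ≤ ‖a‖ * ‖ξ‖)
    (hnd : closure (Submodule.span 𝕜 {y : E | ∃ a ξ, l a ξ = y} : Set E) = Set.univ)
    {ι : Type*} {L : Filter ι} {e : ι → A} (he_norm : ∀ i, ‖e i‖ ≤ 1)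
    (he : ∀ a, Tendsto (fun i => ‖e i * a - a‖) L (nhds 0)) (y : E) :
    Tendsto (fun i => l (e i) y) L (nhds y) := by
  have hbound : ∃ C, ∀ i ξ, ‖l (e i) ξ‖ ≤ C * ‖ξ‖ :=
    ⟨1, fun i ξ => (hnorm _ _).trans (by gcongr; exact he_norm i)⟩
  have hequi := ((NormedSpace.equicontinuous_TFAE fun i => l (e i)).out 3 1).1 hbound
  have hclosed : IsClosed {y : E | Tendsto (fun i => l (e i) y) L (nhds y)} :=
    hequi.isClosed_setOfPred_tendsto continuous_id
  refine closure_minimal (fun y hy => ?_) hclosed (hnd ▸ Set.mem_univ y)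
  induction hy using Submodule.span_induction with
  | mem y hy =>
    obtain ⟨a, ξ, rfl⟩ := hy
    have hea : Tendsto (e · * a) L (nhds a) := tendsto_iff_norm_sub_tendsto_zero.2 (he a)
    simpa only [Set.mem_ofPred_eq, Function.comp_def, ContinuousLinearMap.flip_apply, hmul]
      using ((l.flip ξ).continuous.tendsto a).comp hea
  | zero => simpa using tendsto_const_nhds
  | add x y _ _ hx hy => simpa only [Set.mem_ofPred_eq, map_add] using hx.add hy
  | smul c x _ hx => simpa only [Set.mem_ofPred_eq, map_smul] using hx.const_smul c

theorem HasCAI.isEssential (hA : HasCAI A) (hmul : ∀ a a' ξ, l (a * a') ξ = l a (l a' ξ))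
    (hnorm : ∀ a ξ, ‖l a ξ‖ ≤ ‖a‖ * ‖ξ‖)
    (hnd : closure (Submodule.span 𝕜 {y : E | ∃ a ξ, l a ξ = y} : Set E) = Set.univ) :
    IsEssential l := by
  obtain ⟨ι, L, e, hL, he_norm, he⟩ := hA
  intro ξ hξ
  have := tendsto_lsmul_of_approxUnit hmul hnorm hnd he_norm (fun a => (he a).1) ξ
  simp only [hξ] at this
  exact tendsto_nhds_unique this tendsto_const_nhds

end Essential

section Multiplier

variable {A B E F : Type*} [NonUnitalNormedRing A] [NormedSpace ℂ A] [NonUnitalNormedRing B]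
  [NormedSpace ℂ B] [NormedAddCommGroup E] [NormedSpace ℂ E] [NormedAddCommGroup F]
  [NormedSpace ℂ F] {lE : A →L[ℂ] E →L[ℂ] E} {rE : B →L[ℂ] E →L[ℂ] E}
  {lF : A →L[ℂ] F →L[ℂ] F} {rF : B →L[ℂ] F →L[ℂ] F}

theorem IsMultiplier.ext_of_fst (hE : IsEssential lE) {p q : (A →L[ℂ] E) × (B →L[ℂ] E)}
    (hp : IsMultiplier lE rE p) (hq : IsMultiplier lE rE q) (h : p.1 = q.1) : p = q := by
  refine Prod.ext h (ContinuousLinearMap.ext fun b => sub_eq_zero.1 (hE _ fun a => ?_))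
  rw [map_sub, hp, hq, h, sub_self]

noncomputable def extensionMultiplier (J : E →ₗᵢ[ℂ] F) (hFA : ∀ a ξ, lF a ξ ∈ Set.range J)
    (hFB : ∀ b ξ, rF b ξ ∈ Set.range J) : F →ₗ[ℂ] (A →L[ℂ] E) × (B →L[ℂ] E) where
  toFun ξ := (liftAlong J (lF.flip ξ) (Set.range_subset_iff.2 (hFA · ξ)),
    liftAlong J (rF.flip ξ) (Set.range_subset_iff.2 (hFB · ξ)))
  map_add' ξ η := by ext <;> apply J.injective <;> simp
  map_smul' c ξ := by ext <;> apply J.injective <;> simp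

variable {J : E →ₗᵢ[ℂ] F} {hFA : ∀ a ξ, lF a ξ ∈ Set.range J} {hFB : ∀ b ξ, rF b ξ ∈ Set.range J}

@[simp]
theorem apply_extensionMultiplier_fst (ξ : F) (a : A) :
    J ((extensionMultiplier J hFA hFB ξ).1 a) = lF a ξ :=
  apply_liftAlong J (lF.flip ξ) (Set.range_subset_iff.2 (hFA · ξ)) a

@[simp]
theorem apply_extensionMultiplier_snd (ξ : F) (b : B) :
    J ((extensionMultiplier J hFA hFB ξ).2 b) = rF b ξ :=
  apply_liftAlong J (rF.flip ξ) (Set.range_subset_iff.2 (hFB · ξ)) b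

theorem norm_extensionMultiplier_le (hF : IsBanachBimodule lF rF) (ξ : F) :
    ‖extensionMultiplier J hFA hFB ξ‖ ≤ ‖ξ‖ := by
  refine max_le (ContinuousLinearMap.opNorm_le_bound _ (norm_nonneg ξ) fun a => ?_)
    (ContinuousLinearMap.opNorm_le_bound _ (norm_nonneg ξ) fun b => ?_)
  · rw [← J.norm_map, apply_extensionMultiplier_fst, mul_comm]
    exact hF.norm_lsmul a ξ
  · rw [← J.norm_map, apply_extensionMultiplier_snd, mul_comm]
    exact hF.norm_rsmul b ξ

theorem isMultiplier_extensionMultiplier (hF : IsBanachBimodule lF rF)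
    (hJl : ∀ a ξ, J (lE a ξ) = lF a (J ξ)) (hJr : ∀ b ξ, J (rE b ξ) = rF b (J ξ)) (ξ : F) :
    IsMultiplier lE rE (extensionMultiplier J hFA hFB ξ) := fun a b => by
  apply J.injective
  simp [hJl, hJr, hF.smul_comm]

theorem extensionMultiplier_eq_zero_iff (hE : IsEssential lE) (hF : IsBanachBimodule lF rF)
    (hJl : ∀ a ξ, J (lE a ξ) = lF a (J ξ)) (hJr : ∀ b ξ, J (rE b ξ) = rF b (J ξ)) (ξ : F) :
    extensionMultiplier J hFA hFB ξ = 0 ↔ ∀ a, lF a ξ = 0 := by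
  refine ⟨fun h a => ?_, fun h => ?_⟩
  · rw [← apply_extensionMultiplier_fst (hFA := hFA) (hFB := hFB), h]
    simp
  · refine (isMultiplier_extensionMultiplier hF hJl hJr ξ).ext_of_fst hE (q := 0)
      (fun _ _ => by simp) ?_
    ext a
    apply J.injective
    simp [h]

variable [IsScalarTower ℂ A A] [SMulCommClass ℂ A A] [IsScalarTower ℂ B B] [SMulCommClass ℂ B B]

theorem isBimoduleMapExtendingIota_extensionMultiplier (hF : IsBanachBimodule lF rF)
    (hJl : ∀ a ξ, J (lE a ξ) = lF a (J ξ)) (hJr : ∀ b ξ, J (rE b ξ) = rF b (J ξ)) :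
    IsBimoduleMapExtendingIota lE rE lF rF J (extensionMultiplier J hFA hFB) := by
  refine ⟨isMultiplier_extensionMultiplier hF hJl hJr, map_add _, map_smul _, ?_, ?_, ?_⟩ <;>
  · intros
    ext <;> apply J.injective <;>
      simp [aAct, bAct, iota, hJl, hJr, hF.lsmul_mul, hF.rsmul_mul, hF.smul_comm]

theorem IsBimoduleMapExtendingIota.fst_apply_mul {j : E → F} {μ : F → (A →L[ℂ] E) × (B →L[ℂ] E)}
    (hμ : IsBimoduleMapExtendingIota lE rE lF rF j μ) {ξ : F} {q : A} {η : E}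
    (hη : j η = lF q ξ) (p : A) : (μ ξ).1 (p * q) = lE p η :=
  calc (μ ξ).1 (p * q) = (aAct lE q (μ ξ)).1 p := rfl
    _ = (iota lE rE η).1 p := by rw [← hμ.2.2.2.1, ← hη, hμ.2.2.2.2.2]
    _ = lE p η := rfl

theorem IsBimoduleMapExtendingIota.unique (hA : HasCAI A) (hE : IsEssential lE) {j : E → F}
    (hFA : ∀ a ξ, lF a ξ ∈ Set.range j) {μ μ' : F → (A →L[ℂ] E) × (B →L[ℂ] E)}
    (hμ : IsBimoduleMapExtendingIota lE rE lF rF j μ)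
    (hμ' : IsBimoduleMapExtendingIota lE rE lF rF j μ') : μ = μ' := by
  funext ξ
  refine (hμ.1 ξ).ext_of_fst hE (hμ'.1 ξ) (DFunLike.coe_injective ?_)
  refine hA.ext_of_mul (μ ξ).1.continuous (μ' ξ).1.continuous fun p q => ?_
  obtain ⟨η, hη⟩ := hFA q ξ
  rw [hμ.fst_apply_mul hη, hμ'.fst_apply_mul hη]

end Multiplier

theorem multiplier_bimodule_universal_property
    (hA : HasCAI A)
    (hbimE : IsBanachBimodule lE rE) (hndE : NondegenerateBimodule lE rE)
    (hbimF : IsBanachBimodule lF rF)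
    (j : E → F)
    -- `j` realises `E` isometrically as a closed sub-bimodule of `F`
    (hj_add : ∀ ξ η : E, j (ξ + η) = j ξ + j η)
    (hj_smul : ∀ (c : ℂ) (ξ : E), j (c • ξ) = c • j ξ)
    (hj_isom : ∀ ξ : E, ‖j ξ‖ = ‖ξ‖)
    (hj_l : ∀ (a : A) (ξ : E), j (lE a ξ) = lF a (j ξ))
    (hj_r : ∀ (b : B) (ξ : E), j (rE b ξ) = rF b (j ξ))
    -- `A·F ⊆ E` and `F·B ⊆ E`
    (hFA : ∀ (a : A) (ξ : F), lF a ξ ∈ Set.range j)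
    (hFB : ∀ (b : B) (ξ : F), rF b ξ ∈ Set.range j) :
    ∃ μ : F → (A →L[ℂ] E) × (B →L[ℂ] E),
      IsBimoduleMapExtendingIota lE rE lF rF j μ ∧
      (∀ μ' : F → (A →L[ℂ] E) × (B →L[ℂ] E),
        IsBimoduleMapExtendingIota lE rE lF rF j μ' → μ' = μ) ∧
      (∀ ξ : F, ‖μ ξ‖ ≤ ‖ξ‖) ∧
      (Function.Injective μ ↔ ∀ ξ : F, (∀ a : A, lF a ξ = 0) → ξ = 0) := by
  let J : E →ₗᵢ[ℂ] F :=
    { toFun := j, map_add' := hj_add, map_smul' := hj_smul, norm_map' := hj_isom }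
  have hE : IsEssential lE := hA.isEssential hbimE.lsmul_mul hbimE.norm_lsmul hndE.1
  let μ := extensionMultiplier J hFA hFB
  have hμ : IsBimoduleMapExtendingIota lE rE lF rF j μ :=
    isBimoduleMapExtendingIota_extensionMultiplier hbimF hj_l hj_r
  refine ⟨μ, hμ, fun μ' hμ' => IsBimoduleMapExtendingIota.unique hA hE hFA hμ' hμ,
    norm_extensionMultiplier_le hbimF, ?_⟩
  rw [injective_iff_map_eq_zero]
  exact forall_congr' fun ξ =>
    imp_congr_left (extensionMultiplier_eq_zero_iff (J := J) hE hbimF hj_l hj_r ξ)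

end Stmt7
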